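/- Let q be a positive real number, u a real number, c any complex number, and z, α nonzero complex numbers. Writing q^r for the real power of q (coerced to ℂ), the identity (1 − z/(q^(1−u)·α)) · (q^(4/3)/z − q^(3−3u)·α³ − z·q^(2−2u)·α² − z²·q^(1−u)·α − c·q^(1−u)·α) = z³ + q^(4/3)/z + c·z − (q^(3−3u)·α³ + q^(1/3+u)/α + c·q^(1−u)·α) holds. (This is the matrix factorization of the bulk deformed potential W^𝔟 corresponding to the fiber L_u, obtained by adding the orbifold holomorphic strip contribution c·q^(1−u)·α.) -/

import Mathlib

/-! The right-hand side is `W(z) - W(w)` for `W(z) = z³ + m/z + c z` with `m = q^(4/3)` and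
`w = q^(1-u) α`: indeed `m/w = q^(1/3+u)/α` since `q^(4/3) = q^(1-u) q^(1/3+u)`. Such a
difference always factors with the left factor `1 - z/w`. -/

def teardropPotential {K : Type*} [Field K] (m c z : K) : K :=
  z ^ 3 + m / z + c * z

theorem teardropPotential_sub {K : Type*} [Field K] (m c : K) {z w : K}
    (hz : z ≠ 0) (hw : w ≠ 0) :
    teardropPotential m c z - teardropPotential m c w =
      (1 - z / w) * (m / z - w ^ 3 - z * w ^ 2 - z ^ 2 * w - c * w) := by
  unfold teardropPotential
  field_simp
  ring

theorem Real.rpow_natCast_mul_one_sub {q : ℝ} (hq : 0 ≤ q) (u : ℝ) (k : ℕ) :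
    q ^ ((k : ℝ) - k * u) = (q ^ (1 - u)) ^ k := by
  rw [← Real.rpow_mul_natCast hq]
  ring_nf

/-- Matrix factorization of the bulk deformed potential
`W^𝔟(z) = z³ + q^(4/3)/z + c z` of the teardrop orbifold corresponding to the
fiber `L_u`, obtained by adding the orbifold holomorphic strip contribution
`c·q^(1−u)·α`.  Real exponents denote real powers of the positive real Novikov
parameter `q`, coerced to `ℂ`. -/
theorem teardrop_bulk_matrix_factorization (q : ℝ) (hq : 0 < q) (u : ℝ)
    (c : ℂ) (z α : ℂ) (hz : z ≠ 0) (hα : α ≠ 0) :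
    (1 - z / (((q ^ ((1 : ℝ) - u) : ℝ) : ℂ) * α)) *
      (((q ^ ((4 : ℝ) / 3) : ℝ) : ℂ) / z
        - ((q ^ (3 - 3 * u) : ℝ) : ℂ) * α ^ 3
        - z * ((q ^ (2 - 2 * u) : ℝ) : ℂ) * α ^ 2
        - z ^ 2 * ((q ^ ((1 : ℝ) - u) : ℝ) : ℂ) * α
        - c * ((q ^ ((1 : ℝ) - u) : ℝ) : ℂ) * α)
    = z ^ 3 + ((q ^ ((4 : ℝ) / 3) : ℝ) : ℂ) / z + c * z
      - (((q ^ (3 - 3 * u) : ℝ) : ℂ) * α ^ 3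
        + ((q ^ ((1 : ℝ) / 3 + u) : ℝ) : ℂ) / α
        + c * ((q ^ ((1 : ℝ) - u) : ℝ) : ℂ) * α) := by
  have hsplit : q ^ ((4 : ℝ) / 3) = q ^ ((1 : ℝ) - u) * q ^ ((1 : ℝ) / 3 + u) := by
    rw [← Real.rpow_add hq]
    norm_num
  have hsq := Real.rpow_natCast_mul_one_sub hq.le u 2
  have hcube := Real.rpow_natCast_mul_one_sub hq.le u 3
  push_cast at hsq hcube
  rw [hsq, hcube, hsplit]
  push_cast
  have hA : ((q ^ ((1 : ℝ) - u) : ℝ) : ℂ) ≠ 0 := by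
    exact_mod_cast (Real.rpow_pos_of_pos hq _).ne'
  have hW := teardropPotential_sub
    (((q ^ ((1 : ℝ) - u) : ℝ) : ℂ) * ((q ^ ((1 : ℝ) / 3 + u) : ℝ) : ℂ)) c hz (mul_ne_zero hA hα)
  rw [teardropPotential, teardropPotential, mul_div_mul_left _ _ hA] at hW
  linear_combination -hW
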